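/- arXiv:1709.01826 — 14 statements merged into one kernel-verified Lean document; each statement's English description precedes it below -/
import Mathlib

section
/- Let (Q, →) be a finite transition system and R a preorder on Q. For all q, q' ∈ Q: there exists q'' with q → q'' and q' R q'' if and only if there exists q'' with q →_R q'' and q' R q''. Equivalently, →⁻¹ ∘ R = →_R⁻¹ ∘ R. -/
/-- A transition `q → q'` is `R`-maximal if `q → q'` and every successor `q''` of `q`
with `q' R q''` satisfies `q'' ∈ [q']_R`. -/
def MaxTr {Q : Type*} (tr R : Q → Q → Prop) (q q' : Q) : Prop :=
  tr q q' ∧ ∀ q'', tr q q'' → R q' q'' → (R q' q'' ∧ R q'' q')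

theorem Set.Nonempty.exists_maximal_of_isTrans {α : Type*} [Finite α] {R : α → α → Prop}
    [IsTrans α R] {S : Set α} (hS : S.Nonempty) :
    ∃ m ∈ S, ∀ x ∈ S, R m x → R x m := by
  -- `m` is minimal for the relation "`a` lies strictly above `b`", which is well founded
  -- as a transitive irreflexive relation on a finite type.
  let above : α → α → Prop := fun a b => R b a ∧ ¬ R a b
  have : IsTrans α above := ⟨fun _ _ _ hab hbc =>
    ⟨_root_.trans hbc.1 hab.1, fun hac => hbc.2 (_root_.trans hab.1 hac)⟩⟩
  have : Std.Irrefl above := ⟨fun _ h => h.2 h.1⟩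
  obtain ⟨m, hmS, hmin⟩ := (Finite.wellFounded_of_trans_of_irrefl above).has_min S hS
  exact ⟨m, hmS, fun x hxS hmx => not_not.mp fun hxm => hmin x hxS ⟨hmx, hxm⟩⟩

theorem pre_comp_eq_maxPre_comp_general {Q : Type*} [Fintype Q] (tr R : Q → Q → Prop)
    (htrans : Transitive R) :
    ∀ q q', (∃ q'', tr q q'' ∧ R q' q'') ↔ (∃ q'', MaxTr tr R q q'' ∧ R q' q'') := by
  have : IsTrans Q R := ⟨htrans⟩
  intro q q'
  refine ⟨fun ⟨q'', hq''⟩ => ?_, fun ⟨q'', ⟨htr, _⟩, hR⟩ => ⟨q'', htr, hR⟩⟩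
  obtain ⟨m, ⟨htrm, hRm⟩, hmax⟩ :=
    Set.Nonempty.exists_maximal_of_isTrans (R := R) (S := {x | tr q x ∧ R q' x}) ⟨q'', hq''⟩
  exact ⟨m, ⟨htrm, fun x htrx hmx => ⟨hmx, hmax x ⟨htrx, htrans hRm hmx⟩ hmx⟩⟩, hRm⟩

/-- Lemma 1, second part: `→⁻¹ ∘ R = →_R⁻¹ ∘ R`. -/
theorem pre_comp_eq_maxPre_comp {Q : Type*} [Fintype Q] (tr R : Q → Q → Prop)
    (hrefl : Reflexive R) (htrans : Transitive R) :
    ∀ q q', (∃ q'', tr q q'' ∧ R q' q'') ↔ (∃ q'', MaxTr tr R q q'' ∧ R q' q'') :=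
  pre_comp_eq_maxPre_comp_general tr R htrans
end

section
/- Let (Q, →) be a finite transition system and R a preorder on Q. There exists a coarsest R-stable equivalence relation: an equivalence relation P included in R satisfying P ∘ →⁻¹ ⊆ →⁻¹ ∘ R (for all c, d, b with c P d and c → b there exists b' with d → b' and b R b'), such that every equivalence relation P' included in R satisfying P' ∘ →⁻¹ ⊆ →⁻¹ ∘ R is included in P. -/
/-!
Stability only asks a move of `c` to be matched by `d` up to `R`, not up to `P`. So the preorder
`StepLE tr R` ("`R c d`, and every move of `c` is matched by a move of `d` up to `R`") has as its
kernel an `R`-stable equivalence included in `R`, and every such equivalence `P'` lies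
in that kernel because `P'` is symmetric.
-/

section StepLE

variable {Q : Type*} (tr R : Q → Q → Prop)

def StepLE (c d : Q) : Prop :=
  R c d ∧ ∀ b, tr c b → ∃ b', tr d b' ∧ R b b'

variable {tr R}

instance [IsPreorder Q R] : IsPreorder Q (StepLE tr R) where
  refl c := ⟨refl c, fun b hb => ⟨b, hb, refl b⟩⟩
  trans := by
    rintro c d e ⟨hcd, hsim_cd⟩ ⟨hde, hsim_de⟩
    refine ⟨_root_.trans hcd hde, fun b hb => ?_⟩
    obtain ⟨b', hb', hbb'⟩ := hsim_cd b hb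
    obtain ⟨b'', hb'', hb'b''⟩ := hsim_de b' hb'
    exact ⟨b'', hb'', _root_.trans hbb' hb'b''⟩

theorem antisymmRel_stepLE_of_equivalence {P : Q → Q → Prop} (hP : Equivalence P)
    (hPR : ∀ a b, P a b → R a b) (hstab : ∀ c d b, P c d → tr c b → ∃ b', tr d b' ∧ R b b')
    {c d : Q} (hcd : P c d) : AntisymmRel (StepLE tr R) c d :=
  ⟨⟨hPR c d hcd, fun b => hstab c d b hcd⟩,
    ⟨hPR d c (hP.symm hcd), fun b => hstab d c b (hP.symm hcd)⟩⟩

end StepLE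

theorem exists_coarsest_stable_equivalence_general {Q : Type*}
    (tr R : Q → Q → Prop) (hrefl : Reflexive R) (htrans : Transitive R) :
    ∃ P : Q → Q → Prop, Equivalence P ∧ (∀ a b, P a b → R a b) ∧
      (∀ c d b, P c d → tr c b → ∃ b', tr d b' ∧ R b b') ∧
      (∀ P' : Q → Q → Prop, Equivalence P' → (∀ a b, P' a b → R a b) →
        (∀ c d b, P' c d → tr c b → ∃ b', tr d b' ∧ R b b') →
        ∀ a b, P' a b → P a b) := by
  have : IsPreorder Q R := { refl := hrefl, trans := @htrans }
  exact ⟨AntisymmRel (StepLE tr R), (AntisymmRel.setoid Q (StepLE tr R)).iseqv,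
    fun _ _ h => h.1.1,
    fun _ _ b h => h.1.2 b,
    fun _ hP' hP'R hstab _ _ => antisymmRel_stepLE_of_equivalence hP' hP'R hstab⟩

/-- Proposition 2: there is a coarsest `R`-stable equivalence relation. -/
theorem exists_coarsest_stable_equivalence {Q : Type*} [Fintype Q]
    (tr R : Q → Q → Prop) (hrefl : Reflexive R) (htrans : Transitive R) :
    ∃ P : Q → Q → Prop, Equivalence P ∧ (∀ a b, P a b → R a b) ∧
      (∀ c d b, P c d → tr c b → ∃ b', tr d b' ∧ R b b') ∧
      (∀ P' : Q → Q → Prop, Equivalence P' → (∀ a b, P' a b → R a b) →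
        (∀ c d b, P' c d → tr c b → ∃ b', tr d b' ∧ R b b') →
        ∀ a b, P' a b → P a b) :=
  exists_coarsest_stable_equivalence_general tr R hrefl htrans
end

section
/- Let (Q, →) be a finite transition system, U a preorder on Q, R a U-stable preorder (so R ⊆ U), and P the coarsest R-stable equivalence relation included in R. Define NotRel = U \ R and let NotRel' be the relation containing (c', d') whenever there exist b, c, d with c → b, c R d, d ∈ →⁻¹ ∘ NotRel(b) (i.e. ∃ b', d → b' ∧ b U b' ∧ ¬(b R b')), d ∉ →⁻¹ ∘ R(b) (i.e. ¬∃ b'', d → b'' ∧ b R b''), c' ∈ [c]_P and d' ∈ [d]_P. Then NotRel' equals the relation X containing exactly the pairs (c, d) such that there exists b with c →_R b, c R d, d ∈ →_R⁻¹ ∘ NotRel(b) (i.e. ∃ b', d →_R b' ∧ b U b' ∧ ¬(b R b')), and d ∉ →_R⁻¹ ∘ R(b) (i.e. ¬∃ b'', d →_R b'' ∧ b R b''). -/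
/-- `NotRel' c' d'` holds when there are `b, c, d` with `c → b`, `c R d`,
`d ∈ →⁻¹ ∘ (U \ R)(b)`, `d ∉ →⁻¹ ∘ R(b)`, `c' ∈ [c]_P` and `d' ∈ [d]_P`. -/
def NotRel' {Q : Type*} (tr U R P : Q → Q → Prop) (c' d' : Q) : Prop :=
  ∃ b c d, tr c b ∧ R c d ∧
    (∃ b', tr d b' ∧ U b b' ∧ ¬ R b b') ∧
    ¬(∃ b'', tr d b'' ∧ R b b'') ∧
    P c c' ∧ P d d'

/-!
Because `Q` is finite, every transition `d → x` is dominated by an `R`-maximal one `d →_R m`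
with `x R m`; hence `d ∈ →⁻¹ ∘ R(b)` iff `d ∈ →_R⁻¹ ∘ R(b)`, and this set of states `d` is
closed under `P` since `P` is `R`-stable. A witness `c → b` of `NotRel' c' d'` is moved by
`R`-stability of `P` to `c' → b₁` with `b R b₁` and pushed up to `c' →_R m`. Then `U`-stability
of `R` along `c' R d'` yields `d' →_R m'` with `m U m'`, and `¬ m R m'` because
`d' ∉ →⁻¹ ∘ R(b)`.
-/

section

variable {Q : Type*} {tr R : Q → Q → Prop}

theorem exists_tr_rel_of_stable [IsTrans Q R] {P : Q → Q → Prop}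
    (hPstable : ∀ c d b, P c d → tr c b → ∃ b', tr d b' ∧ R b b')
    {d d' b : Q} (hdd' : P d d') (h : ∃ x, tr d x ∧ R b x) : ∃ x, tr d' x ∧ R b x := by
  obtain ⟨x, hdx, hbx⟩ := h
  obtain ⟨y, hd'y, hxy⟩ := hPstable d d' x hdd' hdx
  exact ⟨y, hd'y, trans_of R hbx hxy⟩

variable [Finite Q] [IsPreorder Q R]

theorem exists_maxTr_rel_of_tr {q b : Q} (h : tr q b) :
    ∃ m, MaxTr tr R q m ∧ R b m := by
  let : Preorder Q := { le := R, le_refl := refl_of R, le_trans := fun _ _ _ => trans_of R }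
  obtain ⟨m, hbm, hm⟩ := Finite.exists_le_maximal (p := tr q) h
  exact ⟨m, ⟨hm.1, fun _ hx hmx => ⟨hmx, hm.2 hx hmx⟩⟩, hbm⟩

theorem exists_maxTr_rel_iff_exists_tr_rel (d b : Q) :
    (∃ x, MaxTr tr R d x ∧ R b x) ↔ ∃ x, tr d x ∧ R b x := by
  refine ⟨fun ⟨x, hx, hbx⟩ => ⟨x, hx.1, hbx⟩, fun ⟨x, hx, hbx⟩ => ?_⟩
  obtain ⟨m, hm, hxm⟩ := exists_maxTr_rel_of_tr (R := R) hx
  exact ⟨m, hm, trans_of R hbx hxm⟩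

theorem exists_maxTr_of_stable {U : Q → Q → Prop} [IsTrans Q U]
    (hRU : ∀ a b, R a b → U a b) (hUstable : ∀ c d b, R c d → tr c b → ∃ b', tr d b' ∧ U b b')
    {c d b : Q} (hcd : R c d) (hcb : tr c b) : ∃ b', MaxTr tr R d b' ∧ U b b' := by
  obtain ⟨x, hdx, hbx⟩ := hUstable c d b hcd hcb
  obtain ⟨m, hm, hxm⟩ := exists_maxTr_rel_of_tr (R := R) hdx
  exact ⟨m, hm, trans_of U hbx (hRU _ _ hxm)⟩

end

theorem notRel'_eq_X_general {Q : Type*} [Fintype Q] (tr U R P : Q → Q → Prop)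
    (hUtrans : Transitive U)
    (hRrefl : Reflexive R) (hRtrans : Transitive R)
    (hRU : ∀ a b, R a b → U a b)
    (hUstable : ∀ c d b, R c d → tr c b → ∃ b', tr d b' ∧ U b b')
    (hPeq : Equivalence P) (hPR : ∀ a b, P a b → R a b)
    (hPstable : ∀ c d b, P c d → tr c b → ∃ b', tr d b' ∧ R b b') :
    ∀ c d, NotRel' tr U R P c d ↔
      (∃ b, MaxTr tr R c b ∧ R c d ∧
        (∃ b', MaxTr tr R d b' ∧ U b b' ∧ ¬ R b b') ∧
        ¬(∃ b'', MaxTr tr R d b'' ∧ R b b'')) := by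
  have : IsPreorder Q R := { refl := hRrefl, trans := fun _ _ _ => @hRtrans _ _ _ }
  have : IsTrans Q U := ⟨fun _ _ _ => @hUtrans _ _ _⟩
  intro c' d'
  simp only [exists_maxTr_rel_iff_exists_tr_rel]
  constructor
  · rintro ⟨b, c, d, hcb, hcd, -, hd, hcc', hdd'⟩
    have hc'd' : R c' d' := hRtrans (hPR _ _ (hPeq.symm hcc')) (hRtrans hcd (hPR _ _ hdd'))
    have hd' : ¬∃ x, tr d' x ∧ R b x :=
      fun h => hd (exists_tr_rel_of_stable hPstable (hPeq.symm hdd') h)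
    obtain ⟨b₁, hc'b₁, hbb₁⟩ := hPstable c c' b hcc' hcb
    obtain ⟨m, hm, hb₁m⟩ := exists_maxTr_rel_of_tr (R := R) hc'b₁
    have hd'm : ¬∃ x, tr d' x ∧ R m x :=
      fun ⟨x, hx, hmx⟩ => hd' ⟨x, hx, hRtrans (hRtrans hbb₁ hb₁m) hmx⟩
    obtain ⟨m', hm', hmm'⟩ := exists_maxTr_of_stable hRU hUstable hc'd' hm.1
    exact ⟨m, hm, hc'd', ⟨m', hm', hmm', fun h => hd'm ⟨m', hm'.1, h⟩⟩, hd'm⟩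
  · rintro ⟨b, hcb, hcd, ⟨b', hdb', hU, hnR⟩, hd⟩
    exact ⟨b, c', d', hcb.1, hcd, ⟨b', hdb'.1, hU, hnR⟩, hd, hPeq.refl c', hPeq.refl d'⟩

/-- Theorem 1, item 1: `NotRel'` coincides with the relation `X` defined via
`R`-maximal transitions. -/
theorem notRel'_eq_X {Q : Type*} [Fintype Q] (tr U R P : Q → Q → Prop)
    (hUrefl : Reflexive U) (hUtrans : Transitive U)
    (hRrefl : Reflexive R) (hRtrans : Transitive R)
    (hRU : ∀ a b, R a b → U a b)
    (hUstable : ∀ c d b, R c d → tr c b → ∃ b', tr d b' ∧ U b b')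
    (hPeq : Equivalence P) (hPR : ∀ a b, P a b → R a b)
    (hPstable : ∀ c d b, P c d → tr c b → ∃ b', tr d b' ∧ R b b')
    (hPcoarsest : ∀ P' : Q → Q → Prop, Equivalence P' → (∀ a b, P' a b → R a b) →
      (∀ c d b, P' c d → tr c b → ∃ b', tr d b' ∧ R b b') →
      ∀ a b, P' a b → P a b) :
    ∀ c d, NotRel' tr U R P c d ↔
      (∃ b, MaxTr tr R c b ∧ R c d ∧
        (∃ b', MaxTr tr R d b' ∧ U b b' ∧ ¬ R b b') ∧
        ¬(∃ b'', MaxTr tr R d b'' ∧ R b b'')) :=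
  notRel'_eq_X_general tr U R P hUtrans hRrefl hRtrans hRU hUstable hPeq hPR hPstable
end

section
/- Let (Q, →) be a finite transition system, U a preorder on Q, R a U-stable preorder (so R ⊆ U), and P the coarsest R-stable equivalence relation included in R. Define NotRel = U \ R, NotRel' as the relation containing (c', d') whenever there exist b, c, d with c → b, c R d, (∃ b', d → b' ∧ b U b' ∧ ¬(b R b')), ¬(∃ b'', d → b'' ∧ b R b''), c' ∈ [c]_P and d' ∈ [d]_P, and set V = R \ NotRel'. Then any simulation S included in R is also included in V. -/
/-
If `c → b₀`, `c P c'`, `c' S d'` and `d' P d`, then the stability of `P`, the simulation property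
of `S` and the stability of `P` again carry `b₀` to some `d → b₃` with `b₀ R b₁ S b₂ R b₃`, hence
`b₀ R b₃` as `S ⊆ R` and `R` is transitive; so `NotRel' c' d'` cannot hold.
-/

/-- `S` is a simulation iff `Transfers tr S S`; `R` is `U`-stable iff `Transfers tr R U`. -/
def Transfers {Q : Type*} (tr A B : Q → Q → Prop) : Prop :=
  ∀ c d b, A c d → tr c b → ∃ b', tr d b' ∧ B b b'

namespace Transfers

variable {Q : Type*} {tr A A' B B' : Q → Q → Prop}

theorem mono_right (h : Transfers tr A B) (hB : ∀ a b, B a b → B' a b) : Transfers tr A B' :=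
  fun c d b hcd hcb ↦
    let ⟨b', hdb', hbb'⟩ := h c d b hcd hcb
    ⟨b', hdb', hB b b' hbb'⟩

theorem flip_of_symm (h : Transfers tr A B) (hA : ∀ ⦃a b⦄, A a b → A b a) :
    Transfers tr (flip A) B :=
  fun c d b hdc ↦ h c d b (hA hdc)

theorem comp (hA : Transfers tr A A') (hB : Transfers tr B B') :
    Transfers tr (Relation.Comp A B) (Relation.Comp A' B') := by
  rintro c e b ⟨d, hcd, hde⟩ hcb
  obtain ⟨b₁, hdb₁, hbb₁⟩ := hA c d b hcd hcb
  obtain ⟨b₂, heb₂, hb₁b₂⟩ := hB d e b₁ hde hdb₁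
  exact ⟨b₂, heb₂, b₁, hbb₁, hb₁b₂⟩

end Transfers

theorem transfers_comp_simulation_of_stable {Q : Type*} {tr R P S : Q → Q → Prop}
    (hRtrans : ∀ ⦃a b c⦄, R a b → R b c → R a c)
    (hPsymm : ∀ ⦃a b⦄, P a b → P b a) (hPstable : Transfers tr P R)
    (hSsim : Transfers tr S S) (hSR : ∀ a b, S a b → R a b) :
    Transfers tr (Relation.Comp P (Relation.Comp S (flip P))) R :=
  (hPstable.comp (hSsim.comp (hPstable.flip_of_symm hPsymm))).mono_right
    fun _ _ ⟨_, hR₁, _, hS, hR₂⟩ ↦ hRtrans hR₁ (hRtrans (hSR _ _ hS) hR₂)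

theorem simulation_subset_V_general {Q : Type*} (tr U R P : Q → Q → Prop)
    (hRtrans : Transitive R)
    (hPeq : Equivalence P)
    (hPstable : ∀ c d b, P c d → tr c b → ∃ b', tr d b' ∧ R b b')
    (S : Q → Q → Prop)
    (hSsim : ∀ c d b, S c d → tr c b → ∃ b', tr d b' ∧ S b b')
    (hSR : ∀ a b, S a b → R a b) :
    ∀ a b, S a b → (R a b ∧ ¬ NotRel' tr U R P a b) := by
  intro a b hS
  refine ⟨hSR a b hS, ?_⟩
  rintro ⟨b₀, c, d, hcb₀, -, -, hno, hca, hdb⟩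
  have hchain := transfers_comp_simulation_of_stable hRtrans (fun _ _ ↦ hPeq.symm) hPstable
    hSsim hSR
  exact hno (hchain c d b₀ ⟨a, hca, b, hS, hdb⟩ hcb₀)

/-- Theorem 1, item 2: any simulation included in `R` is included in `V = R \ NotRel'`. -/
theorem simulation_subset_V {Q : Type*} [Fintype Q] (tr U R P : Q → Q → Prop)
    (hUrefl : Reflexive U) (hUtrans : Transitive U)
    (hRrefl : Reflexive R) (hRtrans : Transitive R)
    (hRU : ∀ a b, R a b → U a b)
    (hUstable : ∀ c d b, R c d → tr c b → ∃ b', tr d b' ∧ U b b')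
    (hPeq : Equivalence P) (hPR : ∀ a b, P a b → R a b)
    (hPstable : ∀ c d b, P c d → tr c b → ∃ b', tr d b' ∧ R b b')
    (hPcoarsest : ∀ P' : Q → Q → Prop, Equivalence P' → (∀ a b, P' a b → R a b) →
      (∀ c d b, P' c d → tr c b → ∃ b', tr d b' ∧ R b b') →
      ∀ a b, P' a b → P a b)
    (S : Q → Q → Prop)
    (hSsim : ∀ c d b, S c d → tr c b → ∃ b', tr d b' ∧ S b b')
    (hSR : ∀ a b, S a b → R a b) :
    ∀ a b, S a b → (R a b ∧ ¬ NotRel' tr U R P a b) :=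
  simulation_subset_V_general tr U R P hRtrans hPeq hPstable S hSsim hSR
end

section
/- Let (Q, →) be a finite transition system, U a preorder on Q, R a U-stable preorder (so R ⊆ U), and P the coarsest R-stable equivalence relation included in R. Define NotRel = U \ R, NotRel' as the relation containing (c', d') whenever there exist b, c, d with c → b, c R d, (∃ b', d → b' ∧ b U b' ∧ ¬(b R b')), ¬(∃ b'', d → b'' ∧ b R b''), c' ∈ [c]_P and d' ∈ [d]_P, and set V = R \ NotRel'. Then V ∘ →⁻¹ ⊆ →⁻¹ ∘ R: for all c, d, b with c V d and c → b there exists b' with d → b' and b R b'. -/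
theorem notRel'_of_not_exists_R_successor {Q : Type*} {tr U R P : Q → Q → Prop}
    (hPrefl : ∀ a, P a a)
    (hUstable : ∀ c d b, R c d → tr c b → ∃ b', tr d b' ∧ U b b')
    {c d b : Q} (hcd : R c d) (hcb : tr c b) (hd : ¬ ∃ b', tr d b' ∧ R b b') :
    NotRel' tr U R P c d := by
  obtain ⟨b', hdb', hUbb'⟩ := hUstable c d b hcd hcb
  exact ⟨b, c, d, hcb, hcd, ⟨b', hdb', hUbb', fun hR => hd ⟨b', hdb', hR⟩⟩, hd,
    hPrefl c, hPrefl d⟩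

theorem V_stable_wrt_R_general {Q : Type*} (tr U R P : Q → Q → Prop)
    (hUstable : ∀ c d b, R c d → tr c b → ∃ b', tr d b' ∧ U b b')
    (hPeq : Equivalence P) :
    ∀ c d b, (R c d ∧ ¬ NotRel' tr U R P c d) → tr c b →
      ∃ b', tr d b' ∧ R b b' := by
  rintro c d b ⟨hcd, hnot⟩ hcb
  by_contra hd
  exact hnot (notRel'_of_not_exists_R_successor hPeq.refl hUstable hcd hcb hd)

/-- Theorem 1, item 3: `V ∘ →⁻¹ ⊆ →⁻¹ ∘ R` where `V = R \ NotRel'`. -/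
theorem V_stable_wrt_R {Q : Type*} [Fintype Q] (tr U R P : Q → Q → Prop)
    (hUrefl : Reflexive U) (hUtrans : Transitive U)
    (hRrefl : Reflexive R) (hRtrans : Transitive R)
    (hRU : ∀ a b, R a b → U a b)
    (hUstable : ∀ c d b, R c d → tr c b → ∃ b', tr d b' ∧ U b b')
    (hPeq : Equivalence P) (hPR : ∀ a b, P a b → R a b)
    (hPstable : ∀ c d b, P c d → tr c b → ∃ b', tr d b' ∧ R b b')
    (hPcoarsest : ∀ P' : Q → Q → Prop, Equivalence P' → (∀ a b, P' a b → R a b) →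
      (∀ c d b, P' c d → tr c b → ∃ b', tr d b' ∧ R b b') →
      ∀ a b, P' a b → P a b) :
    ∀ c d b, (R c d ∧ ¬ NotRel' tr U R P c d) → tr c b →
      ∃ b', tr d b' ∧ R b b' :=
  V_stable_wrt_R_general tr U R P hUstable hPeq
end

section
/- Let (Q, →) be a finite transition system, U a preorder on Q, R a U-stable preorder (so R ⊆ U), and P the coarsest R-stable equivalence relation included in R. Define NotRel = U \ R, NotRel' as the relation containing (c', d') whenever there exist b, c, d with c → b, c R d, (∃ b', d → b' ∧ b U b' ∧ ¬(b R b')), ¬(∃ b'', d → b'' ∧ b R b''), c' ∈ [c]_P and d' ∈ [d]_P, and set V = R \ NotRel'. Then V is a preorder (reflexive and transitive). -/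
section NotRel'

variable {Q : Type*} {tr U R P : Q → Q → Prop}

theorem not_notRel'_self (hPeq : Equivalence P)
    (hPstable : ∀ c d b, P c d → tr c b → ∃ b', tr d b' ∧ R b b') (x : Q) :
    ¬ NotRel' tr U R P x x := by
  rintro ⟨b, c, d, hcb, -, -, hd_no_match, hcx, hdx⟩
  exact hd_no_match (hPstable c d b (hPeq.trans hcx (hPeq.symm hdx)) hcb)

theorem NotRel'.left_or_right (hRtrans : Transitive R) (hPeq : Equivalence P)
    (hPR : ∀ a b, P a b → R a b)
    (hUstable : ∀ c d b, R c d → tr c b → ∃ b', tr d b' ∧ U b b')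
    {a b c : Q} (h : NotRel' tr U R P a c) (hab : R a b) (hbc : R b c) :
    NotRel' tr U R P a b ∨ NotRel' tr U R P b c := by
  obtain ⟨b₀, c₀, d₀, hc₀b₀, -, -, hd₀_no_match, hc₀a, hd₀c⟩ := h
  by_cases hb_match : ∃ b₁, tr b b₁ ∧ R b₀ b₁
  · obtain ⟨b₁, hbb₁, hb₀b₁⟩ := hb_match
    have hbd₀ : R b d₀ := hRtrans hbc (hPR _ _ (hPeq.symm hd₀c))
    obtain ⟨b₂, hd₀b₂, hb₁b₂⟩ := hUstable b d₀ b₁ hbd₀ hbb₁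
    have hd₀_no_match' : ¬ ∃ b₃, tr d₀ b₃ ∧ R b₁ b₃ := fun ⟨b₃, hd₀b₃, hb₁b₃⟩ =>
      hd₀_no_match ⟨b₃, hd₀b₃, hRtrans hb₀b₁ hb₁b₃⟩
    exact Or.inr ⟨b₁, b, d₀, hbb₁, hbd₀,
      ⟨b₂, hd₀b₂, hb₁b₂, fun hb₁b₂ => hd₀_no_match' ⟨b₂, hd₀b₂, hb₁b₂⟩⟩,
      hd₀_no_match', hPeq.refl b, hd₀c⟩
  · have hc₀b : R c₀ b := hRtrans (hPR _ _ hc₀a) hab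
    obtain ⟨b₁, hbb₁, hb₀b₁⟩ := hUstable c₀ b b₀ hc₀b hc₀b₀
    exact Or.inl ⟨b₀, c₀, b, hc₀b₀, hc₀b,
      ⟨b₁, hbb₁, hb₀b₁, fun hR => hb_match ⟨b₁, hbb₁, hR⟩⟩, hb_match, hc₀a, hPeq.refl b⟩

end NotRel'

theorem V_is_preorder_general {Q : Type*} (tr U R P : Q → Q → Prop)
    (hRrefl : Reflexive R) (hRtrans : Transitive R)
    (hUstable : ∀ c d b, R c d → tr c b → ∃ b', tr d b' ∧ U b b')
    (hPeq : Equivalence P) (hPR : ∀ a b, P a b → R a b)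
    (hPstable : ∀ c d b, P c d → tr c b → ∃ b', tr d b' ∧ R b b') :
    Reflexive (fun c d => R c d ∧ ¬ NotRel' tr U R P c d) ∧
    Transitive (fun c d => R c d ∧ ¬ NotRel' tr U R P c d) :=
  ⟨fun x => ⟨hRrefl x, not_notRel'_self hPeq hPstable x⟩,
    fun _ _ _ hab hbc => ⟨hRtrans hab.1 hbc.1, fun hac =>
      (hac.left_or_right hRtrans hPeq hPR hUstable hab.1 hbc.1).elim hab.2 hbc.2⟩⟩

/-- Theorem 1, item 4: `V = R \ NotRel'` is a preorder. -/
theorem V_is_preorder {Q : Type*} [Fintype Q] (tr U R P : Q → Q → Prop)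
    (hUrefl : Reflexive U) (hUtrans : Transitive U)
    (hRrefl : Reflexive R) (hRtrans : Transitive R)
    (hRU : ∀ a b, R a b → U a b)
    (hUstable : ∀ c d b, R c d → tr c b → ∃ b', tr d b' ∧ U b b')
    (hPeq : Equivalence P) (hPR : ∀ a b, P a b → R a b)
    (hPstable : ∀ c d b, P c d → tr c b → ∃ b', tr d b' ∧ R b b')
    (hPcoarsest : ∀ P' : Q → Q → Prop, Equivalence P' → (∀ a b, P' a b → R a b) →
      (∀ c d b, P' c d → tr c b → ∃ b', tr d b' ∧ R b b') →
      ∀ a b, P' a b → P a b) :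
    Reflexive (fun c d => R c d ∧ ¬ NotRel' tr U R P c d) ∧
    Transitive (fun c d => R c d ∧ ¬ NotRel' tr U R P c d) :=
  V_is_preorder_general tr U R P hRrefl hRtrans hUstable hPeq hPR hPstable
end

section
/- Let (Q, →) be a finite transition system, U a preorder on Q, R a U-stable preorder (so R ⊆ U), and P the coarsest R-stable equivalence relation included in R. Define NotRel = U \ R, NotRel' as the relation containing (c', d') whenever there exist b, c, d with c → b, c R d, (∃ b', d → b' ∧ b U b' ∧ ¬(b R b')), ¬(∃ b'', d → b'' ∧ b R b''), c' ∈ [c]_P and d' ∈ [d]_P, and set V = R \ NotRel'. Then the blocks of V are exactly the blocks of P: for all q, q' ∈ Q, (q V q' ∧ q' V q) if and only if q P q'. -/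
/-!
Inside a `P`-block no `NotRel'` pair can occur, because `P` is `R`-stable; so
`P`-related states lie in one `V`-block. Conversely `V` is `R`-stable: if `c V d` and `c → b` had no
`R`-match from `d`, the `U`-stability of `R` would supply a `U`-match, making `(c, d)` a `NotRel'`
pair. So "same `V`-block" is a symmetric, `R`-stable subrelation of `R`; its reflexive-transitive
closure is an `R`-stable equivalence inside `R`, hence lies below the coarsest one, `P`.
-/

open Relation

section

variable {Q : Type*} {tr U R P S : Q → Q → Prop}

def IsStable (tr S R : Q → Q → Prop) : Prop :=
  ∀ c d b, S c d → tr c b → ∃ b', tr d b' ∧ R b b'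

theorem IsStable.reflTransGen (hRrefl : ∀ a, R a a)
    (hRtrans : ∀ ⦃a b c⦄, R a b → R b c → R a c) (hS : IsStable tr S R) :
    IsStable tr (ReflTransGen S) R := by
  intro c d b hcd hcb
  induction hcd with
  | refl => exact ⟨b, hcb, hRrefl b⟩
  | tail _ hde ih =>
    obtain ⟨b₁, hdb₁, hbb₁⟩ := ih
    obtain ⟨b₂, heb₂, hb₁b₂⟩ := hS _ _ _ hde hdb₁
    exact ⟨b₂, heb₂, hRtrans hbb₁ hb₁b₂⟩

theorem le_coarsest_of_symm_of_isStable (hRrefl : ∀ a, R a a)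
    (hRtrans : ∀ ⦃a b c⦄, R a b → R b c → R a c)
    (hPcoarsest : ∀ P' : Q → Q → Prop, Equivalence P' → (∀ a b, P' a b → R a b) →
      IsStable tr P' R → ∀ a b, P' a b → P a b)
    (hSsymm : ∀ a b, S a b → S b a) (hSR : ∀ a b, S a b → R a b) (hS : IsStable tr S R) :
    ∀ a b, S a b → P a b := by
  have : Std.Symm S := ⟨hSsymm⟩
  have hequiv : Equivalence (ReflTransGen S) :=
    ⟨fun _ => .refl, fun h => Std.Symm.symm _ _ h, ReflTransGen.trans⟩
  have hle : ∀ a b, ReflTransGen S a b → R a b := fun a b h => by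
    induction h with
    | refl => exact hRrefl a
    | tail _ hcd ih => exact hRtrans ih (hSR _ _ hcd)
  exact fun a b h =>
    hPcoarsest _ hequiv hle (hS.reflTransGen hRrefl hRtrans) a b (ReflTransGen.single h)

theorem not_notRel'_of_isStable (hPeq : Equivalence P) (hPstable : IsStable tr P R) {a b : Q}
    (hab : P a b) : ¬ NotRel' tr U R P a b := by
  rintro ⟨b₀, c, d, hcb₀, -, -, hno, hca, hdb⟩
  exact hno (hPstable c d b₀ (hPeq.trans hca (hPeq.trans hab (hPeq.symm hdb))) hcb₀)

theorem isStable_sdiff_notRel' (hPrefl : ∀ a, P a a) (hUstable : IsStable tr R U) :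
    IsStable tr (fun c d => R c d ∧ ¬ NotRel' tr U R P c d) R := by
  rintro c d b ⟨hcd, hncd⟩ hcb
  by_contra hno
  obtain ⟨b', hdb', hbb'⟩ := hUstable c d b hcd hcb
  exact hncd ⟨b, c, d, hcb, hcd, ⟨b', hdb', hbb', fun h => hno ⟨b', hdb', h⟩⟩, hno,
    hPrefl c, hPrefl d⟩

end

theorem V_blocks_eq_P_blocks_general {Q : Type*} (tr U R P : Q → Q → Prop)
    (hRrefl : Reflexive R) (hRtrans : Transitive R)
    (hUstable : ∀ c d b, R c d → tr c b → ∃ b', tr d b' ∧ U b b')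
    (hPeq : Equivalence P) (hPR : ∀ a b, P a b → R a b)
    (hPstable : ∀ c d b, P c d → tr c b → ∃ b', tr d b' ∧ R b b')
    (hPcoarsest : ∀ P' : Q → Q → Prop, Equivalence P' → (∀ a b, P' a b → R a b) →
      (∀ c d b, P' c d → tr c b → ∃ b', tr d b' ∧ R b b') →
      ∀ a b, P' a b → P a b) :
    ∀ q q', ((R q q' ∧ ¬ NotRel' tr U R P q q') ∧ (R q' q ∧ ¬ NotRel' tr U R P q' q)) ↔
      P q q' := by
  have hV : IsStable tr (fun c d => R c d ∧ ¬ NotRel' tr U R P c d) R :=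
    isStable_sdiff_notRel' hPeq.refl hUstable
  have hPV : ∀ a b, P a b → R a b ∧ ¬ NotRel' tr U R P a b := fun a b h =>
    ⟨hPR a b h, not_notRel'_of_isStable hPeq hPstable h⟩
  refine fun q q' => ⟨fun h => ?_, fun h => ⟨hPV q q' h, hPV q' q (hPeq.symm h)⟩⟩
  exact le_coarsest_of_symm_of_isStable (S := fun a b =>
      (R a b ∧ ¬ NotRel' tr U R P a b) ∧ (R b a ∧ ¬ NotRel' tr U R P b a))
    hRrefl hRtrans hPcoarsest (fun _ _ h => ⟨h.2, h.1⟩) (fun _ _ h => h.1.1)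
    (fun c d b h => hV c d b h.1) q q' h

/-- Theorem 1, item 6: the blocks of `V = R \ NotRel'` are exactly the blocks of `P`. -/
theorem V_blocks_eq_P_blocks {Q : Type*} [Fintype Q] (tr U R P : Q → Q → Prop)
    (hUrefl : Reflexive U) (hUtrans : Transitive U)
    (hRrefl : Reflexive R) (hRtrans : Transitive R)
    (hRU : ∀ a b, R a b → U a b)
    (hUstable : ∀ c d b, R c d → tr c b → ∃ b', tr d b' ∧ U b b')
    (hPeq : Equivalence P) (hPR : ∀ a b, P a b → R a b)
    (hPstable : ∀ c d b, P c d → tr c b → ∃ b', tr d b' ∧ R b b')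
    (hPcoarsest : ∀ P' : Q → Q → Prop, Equivalence P' → (∀ a b, P' a b → R a b) →
      (∀ c d b, P' c d → tr c b → ∃ b', tr d b' ∧ R b b') →
      ∀ a b, P' a b → P a b) :
    ∀ q q', ((R q q' ∧ ¬ NotRel' tr U R P q q') ∧ (R q' q ∧ ¬ NotRel' tr U R P q' q)) ↔
      P q q' :=
  V_blocks_eq_P_blocks_general tr U R P hRrefl hRtrans hUstable hPeq hPR hPstable hPcoarsest
end

section
/- Let (Q, →) be a transition system, R a preorder on Q, P an equivalence relation included in R, and rep a representative map for P. Let e, b ∈ Q with e → b and suppose ¬(∃ b', b R b' ∧ rep(e) → b') (so the transition from the block of e to the block of b is a splitter transition of type 1). Let M = {d ∈ Q | ∃ b', b R b' ∧ d → b'} and let P' = Split(P, M). Then P' is strictly included in P (P' ⊆ P and P' ≠ P), and every R-block-stable equivalence relation P'' included in P is included in P'. -/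
theorem split_ne_of_separates {Q : Type*} {P : Q → Q → Prop} {M : Set Q} {x y : Q}
    (hxy : P x y) (hx : x ∈ M) (hy : y ∉ M) :
    (fun q q' => P q q' ∧ (q ∈ M ↔ q' ∈ M)) ≠ P := by
  intro h
  exact hy (((congrFun₂ h x y).mpr hxy).2.mp hx)

theorem split1_correct_general {Q : Type*} (tr R P : Q → Q → Prop)
    (hRrefl : Reflexive R)
    (rep : Q → Q) (hrep1 : ∀ q, P q (rep q))
    (e b : Q) (heb : tr e b)
    (hsplitter : ¬ ∃ b', R b b' ∧ tr (rep e) b') :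
    let M : Set Q := {d | ∃ b', R b b' ∧ tr d b'}
    let P' : Q → Q → Prop := fun q q' => P q q' ∧ (q ∈ M ↔ q' ∈ M)
    ((∀ a c, P' a c → P a c) ∧ P' ≠ P) ∧
    (∀ P'' : Q → Q → Prop, Equivalence P'' → (∀ a c, P'' a c → P a c) →
      (∀ x d d', P'' d d' → ((∃ b', R x b' ∧ tr d b') ↔ (∃ b', R x b' ∧ tr d' b'))) →
      ∀ a c, P'' a c → P' a c) := by
  intro M P'
  have he_mem : e ∈ M := ⟨b, hRrefl b, heb⟩
  refine ⟨⟨fun a c h => h.1, split_ne_of_separates (hrep1 e) he_mem hsplitter⟩, ?_⟩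
  -- stability at `x := b` says exactly that `P''` respects membership in `M`
  intro P'' _ hsub hstable a c h
  exact ⟨hsub a c h, hstable b a c h⟩

/-- Lemma 3: splitting with a splitter transition of type 1 strictly refines `P`, and
every `R`-block-stable equivalence relation included in `P` is included in the result. -/
theorem split1_correct {Q : Type*} (tr R P : Q → Q → Prop)
    (hRrefl : Reflexive R) (hRtrans : Transitive R)
    (hPeq : Equivalence P) (hPR : ∀ a b, P a b → R a b)
    (rep : Q → Q) (hrep1 : ∀ q, P q (rep q)) (hrep2 : ∀ q q', P q q' → rep q = rep q')
    (e b : Q) (heb : tr e b)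
    (hsplitter : ¬ ∃ b', R b b' ∧ tr (rep e) b') :
    let M : Set Q := {d | ∃ b', R b b' ∧ tr d b'}
    let P' : Q → Q → Prop := fun q q' => P q q' ∧ (q ∈ M ↔ q' ∈ M)
    ((∀ a c, P' a c → P a c) ∧ P' ≠ P) ∧
    (∀ P'' : Q → Q → Prop, Equivalence P'' → (∀ a c, P'' a c → P a c) →
      (∀ x d d', P'' d d' → ((∃ b', R x b' ∧ tr d b') ↔ (∃ b', R x b' ∧ tr d' b'))) →
      ∀ a c, P'' a c → P' a c) :=
  split1_correct_general tr R P hRrefl rep hrep1 e b heb hsplitter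
end

section
/- Let (Q, →) be a finite transition system, R a preorder on Q, P an equivalence relation included in R, and rep a representative map for P. Assume there is no splitter transition of type 1: for all e, b with e → b there exists b' with b R b' and rep(e) → b'. Then for all e, b with e → b there exists b' with b R b' and rep(e) →_R b' (the transition rep(e) → b' is R-maximal). -/
/- Among the successors `q` of `rep e` with `b R q` (a nonempty set, since there is no
splitter), finiteness yields an `R`-maximal one; it is `R`-maximal among all successors of
`rep e` because that set is upward closed under `R`. -/

theorem Set.Finite.exists_maximal_of_isTrans {α : Type*} (R : α → α → Prop) [IsTrans α R]
    {s : Set α} (hs : s.Finite) (hne : s.Nonempty) :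
    ∃ m ∈ s, ∀ q ∈ s, R m q → R q m := by
  let above : α → α → Prop := fun a b => R b a ∧ ¬ R a b
  have : IsStrictOrder α above :=
    { irrefl := fun _ h => h.2 h.1
      trans := fun _ _ _ hab hbc =>
        ⟨_root_.trans hbc.1 hab.1, fun hac => hbc.2 (_root_.trans hab.1 hac)⟩ }
  obtain ⟨m, hms, hmin⟩ :=
    (Set.wellFoundedOn_iff.mp (hs.wellFoundedOn (r := above))).has_min s hne
  exact ⟨m, hms, fun q hq hmq => by_contra fun hqm => hmin q hq ⟨⟨hmq, hqm⟩, hq, hms⟩⟩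

theorem rep_reaches_via_maximal_general {Q : Type*} [Fintype Q] (tr R : Q → Q → Prop)
    (hRtrans : Transitive R)
    (rep : Q → Q)
    (hNoSplit1 : ∀ e b, tr e b → ∃ b', R b b' ∧ tr (rep e) b') :
    ∀ e b, tr e b → ∃ b', R b b' ∧ MaxTr tr R (rep e) b' := by
  have : IsTrans Q R := ⟨fun _ _ _ => @hRtrans _ _ _⟩
  intro e b htr
  obtain ⟨b₀, hbb₀, htr₀⟩ := hNoSplit1 e b htr
  obtain ⟨m, ⟨htrm, hbm⟩, hmax⟩ :=
    (Set.toFinite {q | tr (rep e) q ∧ R b q}).exists_maximal_of_isTrans R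
      ⟨b₀, htr₀, hbb₀⟩
  exact ⟨m, hbm, htrm, fun q htrq hmq => ⟨hmq, hmax q ⟨htrq, hRtrans hbm hmq⟩ hmq⟩⟩

/-- Lemma 4: in absence of splitter transitions of type 1, `E → B` implies
`E.Rep ∈ →_R⁻¹ ∘ R (B)`. -/
theorem rep_reaches_via_maximal {Q : Type*} [Fintype Q] (tr R P : Q → Q → Prop)
    (hRrefl : Reflexive R) (hRtrans : Transitive R)
    (hPeq : Equivalence P) (hPR : ∀ a b, P a b → R a b)
    (rep : Q → Q) (hrep1 : ∀ q, P q (rep q)) (hrep2 : ∀ q q', P q q' → rep q = rep q')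
    (hNoSplit1 : ∀ e b, tr e b → ∃ b', R b b' ∧ tr (rep e) b') :
    ∀ e b, tr e b → ∃ b', R b b' ∧ MaxTr tr R (rep e) b' :=
  rep_reaches_via_maximal_general tr R hRtrans rep hNoSplit1
end

section
/- Let (Q, →) be a finite transition system, R a preorder on Q, and P an equivalence relation included in R. Then P is R-block-stable if and only if P ∘ →_R⁻¹ ⊆ →⁻¹ ∘ [·]_R, i.e. for all c, c', d: if c →_R c' and c P d, then there exists d' with d → d' and d' ∈ [c']_R. -/
section

variable {Q : Type*} {tr R P : Q → Q → Prop}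

def BlockStable (tr R P : Q → Q → Prop) : Prop :=
  ∀ b d d', P d d' → ((∃ b', R b b' ∧ tr d b') ↔ (∃ b', R b b' ∧ tr d' b'))

def MaxTrStable (tr R P : Q → Q → Prop) : Prop :=
  ∀ c c' d, MaxTr tr R c c' → P c d → ∃ d', tr d d' ∧ (R c' d' ∧ R d' c')

theorem exists_maxTr_above [Finite Q] [IsPreorder Q R] {q b : Q} (hqb : tr q b) :
    ∃ m, MaxTr tr R q m ∧ R b m := by
  let _ : Preorder Q := { le := R, le_refl := refl_of R, le_trans := fun _ _ _ => trans_of R }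
  obtain ⟨m, hbm, hm⟩ := Finite.exists_le_maximal (p := tr q) hqb
  exact ⟨m, ⟨hm.prop, fun z hqz hmz => ⟨hmz, hm.le_of_ge hqz hmz⟩⟩, hbm⟩

variable [Finite Q] [IsPreorder Q R] [Std.Symm P]

theorem BlockStable.maxTrStable (hP : BlockStable tr R P) : MaxTrStable tr R P := by
  intro c c' d ⟨hcc', hc'max⟩ hcd
  obtain ⟨b, hc'b, hdb⟩ := (hP c' c d hcd).mp ⟨c', refl_of R c', hcc'⟩
  obtain ⟨x, ⟨hdx, -⟩, hbx⟩ := exists_maxTr_above (R := R) hdb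
  have hc'x : R c' x := trans_of R hc'b hbx
  obtain ⟨y, hxy, hcy⟩ := (hP x d c (symm_of P hcd)).mp ⟨x, refl_of R x, hdx⟩
  have hyc' : R y c' := (hc'max y hcy (trans_of R hc'x hxy)).2
  exact ⟨x, hdx, hc'x, trans_of R hxy hyc'⟩

theorem MaxTrStable.blockStable (hP : MaxTrStable tr R P) : BlockStable tr R P := by
  have transfer : ∀ b d d', P d d' → (∃ b', R b b' ∧ tr d b') → ∃ b', R b b' ∧ tr d' b' := by
    rintro b d d' hdd' ⟨b', hbb', hdb'⟩
    obtain ⟨x, hdx, hb'x⟩ := exists_maxTr_above (R := R) hdb'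
    obtain ⟨y, hd'y, hxy, -⟩ := hP d x d' hdx hdd'
    exact ⟨y, trans_of R hbb' (trans_of R hb'x hxy), hd'y⟩
  exact fun b d d' hdd' => ⟨transfer b d d' hdd', transfer b d' d (symm_of P hdd')⟩

end

theorem blockStable_iff_maximal_stable_general {Q : Type*} [Fintype Q] (tr R P : Q → Q → Prop)
    (hRrefl : Reflexive R) (hRtrans : Transitive R)
    (hPeq : Equivalence P) :
    (∀ b d d', P d d' → ((∃ b', R b b' ∧ tr d b') ↔ (∃ b', R b b' ∧ tr d' b'))) ↔
    (∀ c c' d, MaxTr tr R c c' → P c d → ∃ d', tr d d' ∧ (R c' d' ∧ R d' c')) := by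
  have : IsPreorder Q R := { refl := hRrefl, trans := fun _ _ _ => @hRtrans _ _ _ }
  have : Std.Symm P := ⟨fun _ _ => hPeq.symm⟩
  exact ⟨BlockStable.maxTrStable, MaxTrStable.blockStable⟩

/-- Lemma 5: `P` is `R`-block-stable iff `P ∘ →_R⁻¹ ⊆ →⁻¹ ∘ [·]_R`. -/
theorem blockStable_iff_maximal_stable {Q : Type*} [Fintype Q] (tr R P : Q → Q → Prop)
    (hRrefl : Reflexive R) (hRtrans : Transitive R)
    (hPeq : Equivalence P) (hPR : ∀ a b, P a b → R a b) :
    (∀ b d d', P d d' → ((∃ b', R b b' ∧ tr d b') ↔ (∃ b', R b b' ∧ tr d' b'))) ↔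
    (∀ c c' d, MaxTr tr R c c' → P c d → ∃ d', tr d d' ∧ (R c' d' ∧ R d' c')) :=
  blockStable_iff_maximal_stable_general tr R P hRrefl hRtrans hPeq
end

section
/- Let (Q, →) be a finite transition system, R a preorder on Q, P an equivalence relation included in R, and rep a representative map for P. Assume there is no splitter transition of type 1: for all e', b'' with e' → b'' there exists b₂ with b'' R b₂ and rep(e') → b₂. Let e, b ∈ Q and assume the transition from the block of e to B = [b]_R is a splitter transition of type 2: (a) there exists b' ∈ [b]_R with rep(e) → b'; (b) for every q', if rep(e) → q' and b R q' then q' ∈ [b]_R; (c) there exists e'' with e'' P e and no transition from e'' into [b]_R (¬∃ b', b' ∈ [b]_R ∧ e'' → b'). Let M = {q ∈ Q | q P e ∧ ∃ b', b' ∈ [b]_R ∧ q → b'} and P' = Split(P, M). Then P' is strictly included in P (P' ⊆ P and P' ≠ P), and every R-block-stable equivalence relation P'' included in P is included in P'. -/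
/-!
If `x ∈ M` and `P'' x y`, block stability moves the transition of `x` into `B = [b]_R` to a
transition `y → b₂` with `b R b₂`. Since `y P e`, the absence of type-1 splitters gives
`rep e → b₃` with `b₂ R b₃`, and condition (b) puts `b₃` in `B`; then `b R b₂ R b₃ R b` puts `b₂`
in `B`, so `y ∈ M`. Hence `M` is a union of `P''`-classes, i.e. `P'' ⊆ Split(P, M)`.
Strictness: `rep e ∈ M` by (a), the witness `e''` of (c) lies outside `M`, and both are
`P`-related to `e`.
-/

section

variable {Q : Type*}

def splitRel (P : Q → Q → Prop) (M : Set Q) (q q' : Q) : Prop :=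
  P q q' ∧ (q ∈ M ↔ q' ∈ M)

theorem splitRel_ne {P : Q → Q → Prop} {M : Set Q} {a c : Q} (hac : P a c) (ha : a ∈ M)
    (hc : c ∉ M) : splitRel P M ≠ P := by
  intro h
  have hsplit : splitRel P M a c := by rw [h]; exact hac
  exact hc (hsplit.2.mp ha)

theorem le_splitRel_of_forall_mem {P P'' : Q → Q → Prop} {M : Set Q}
    (hsymm : ∀ {x y}, P'' x y → P'' y x) (hle : ∀ a c, P'' a c → P a c)
    (hM : ∀ x y, P'' x y → x ∈ M → y ∈ M) {a c : Q} (hac : P'' a c) : splitRel P M a c :=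
  ⟨hle a c hac, hM a c hac, hM c a (hsymm hac)⟩

theorem exists_tr_block_of_exists_tr_ge {tr R P : Q → Q → Prop} (hRtrans : Transitive R)
    {rep : Q → Q} (hrep : ∀ q q', P q q' → rep q = rep q')
    (hNoSplit1 : ∀ e' b'', tr e' b'' → ∃ b₂, R b'' b₂ ∧ tr (rep e') b₂) {e b : Q}
    (hb : ∀ q', tr (rep e) q' → R b q' → (R b q' ∧ R q' b)) {y : Q} (hye : P y e)
    (hy : ∃ b', R b b' ∧ tr y b') : ∃ b', (R b b' ∧ R b' b) ∧ tr y b' := by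
  obtain ⟨b₂, hbb₂, hyb₂⟩ := hy
  obtain ⟨b₃, hb₂b₃, hrepb₃⟩ := hNoSplit1 y b₂ hyb₂
  rw [hrep y e hye] at hrepb₃
  have hb₃b : R b₃ b := (hb b₃ hrepb₃ (hRtrans hbb₂ hb₂b₃)).2
  exact ⟨b₂, ⟨hbb₂, hRtrans hb₂b₃ hb₃b⟩, hyb₂⟩

end

theorem split2_correct_general {Q : Type*} (tr R P : Q → Q → Prop)
    (hRtrans : Transitive R)
    (hPeq : Equivalence P)
    (rep : Q → Q) (hrep1 : ∀ q, P q (rep q)) (hrep2 : ∀ q q', P q q' → rep q = rep q')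
    (hNoSplit1 : ∀ e' b'', tr e' b'' → ∃ b₂, R b'' b₂ ∧ tr (rep e') b₂)
    (e b : Q)
    (ha : ∃ b', (R b b' ∧ R b' b) ∧ tr (rep e) b')
    (hb : ∀ q', tr (rep e) q' → R b q' → (R b q' ∧ R q' b))
    (hc : ∃ e'', P e'' e ∧ ¬ ∃ b', (R b b' ∧ R b' b) ∧ tr e'' b') :
    let M : Set Q := {q | P q e ∧ ∃ b', (R b b' ∧ R b' b) ∧ tr q b'}
    let P' : Q → Q → Prop := fun q q' => P q q' ∧ (q ∈ M ↔ q' ∈ M)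
    ((∀ a c, P' a c → P a c) ∧ P' ≠ P) ∧
    (∀ P'' : Q → Q → Prop, Equivalence P'' → (∀ a c, P'' a c → P a c) →
      (∀ x d d', P'' d d' → ((∃ b', R x b' ∧ tr d b') ↔ (∃ b', R x b' ∧ tr d' b'))) →
      ∀ a c, P'' a c → P' a c) := by
  intro M P'
  obtain ⟨e'', he''e, he''⟩ := hc
  have hrepM : rep e ∈ M := ⟨hPeq.symm (hrep1 e), ha⟩
  have he''M : e'' ∉ M := fun h => he'' h.2
  refine ⟨⟨fun a c h => h.1, splitRel_ne (hPeq.trans (hPeq.symm (hrep1 e)) (hPeq.symm he''e))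
    hrepM he''M⟩, fun P'' hP''eq hP''P hstab a c hac => ?_⟩
  refine le_splitRel_of_forall_mem hP''eq.symm hP''P (fun x y hxy hxM => ?_) hac
  obtain ⟨hxe, b₁, ⟨hbb₁, -⟩, hxb₁⟩ := hxM
  have hye : P y e := hPeq.trans (hPeq.symm (hP''P x y hxy)) hxe
  have hy : ∃ b', R b b' ∧ tr y b' := (hstab b x y hxy).mp ⟨b₁, hbb₁, hxb₁⟩
  exact ⟨hye, exists_tr_block_of_exists_tr_ge hRtrans hrep2 hNoSplit1 hb hye hy⟩

/-- Lemma 6: splitting with a splitter transition of type 2 (in absence of splitter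
transitions of type 1) strictly refines `P`, and every `R`-block-stable equivalence
relation included in `P` is included in the result. -/
theorem split2_correct {Q : Type*} [Fintype Q] (tr R P : Q → Q → Prop)
    (hRrefl : Reflexive R) (hRtrans : Transitive R)
    (hPeq : Equivalence P) (hPR : ∀ a b, P a b → R a b)
    (rep : Q → Q) (hrep1 : ∀ q, P q (rep q)) (hrep2 : ∀ q q', P q q' → rep q = rep q')
    (hNoSplit1 : ∀ e' b'', tr e' b'' → ∃ b₂, R b'' b₂ ∧ tr (rep e') b₂)
    (e b : Q)
    (ha : ∃ b', (R b b' ∧ R b' b) ∧ tr (rep e) b')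
    (hb : ∀ q', tr (rep e) q' → R b q' → (R b q' ∧ R q' b))
    (hc : ∃ e'', P e'' e ∧ ¬ ∃ b', (R b b' ∧ R b' b) ∧ tr e'' b') :
    let M : Set Q := {q | P q e ∧ ∃ b', (R b b' ∧ R b' b) ∧ tr q b'}
    let P' : Q → Q → Prop := fun q q' => P q q' ∧ (q ∈ M ↔ q' ∈ M)
    ((∀ a c, P' a c → P a c) ∧ P' ≠ P) ∧
    (∀ P'' : Q → Q → Prop, Equivalence P'' → (∀ a c, P'' a c → P a c) →
      (∀ x d d', P'' d d' → ((∃ b', R x b' ∧ tr d b') ↔ (∃ b', R x b' ∧ tr d' b'))) →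
      ∀ a c, P'' a c → P' a c) :=
  split2_correct_general tr R P hRtrans hPeq rep hrep1 hrep2 hNoSplit1 e b ha hb hc
end

section
/- Let (Q, →) be a finite transition system, R a preorder on Q, P an equivalence relation included in R, and rep a representative map for P. Assume there is no splitter transition of type 1: for all e, b with e → b there exists b' with b R b' and rep(e) → b'. Assume there is no splitter transition of type 2: for all e, b, if there exists b' ∈ [b]_R with rep(e) → b' and for every q' with rep(e) → q' and b R q' one has q' ∈ [b]_R, then every e'' with e'' P e has a transition into [b]_R (∃ b'', b'' ∈ [b]_R ∧ e'' → b''). Then P is R-block-stable. -/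
/-!
If `d → b'` with `b R b'`, the absence of type-1 splitters gives a transition of `rep d` to some
`R`-successor of `b`. Among these successors pick an `R`-maximal one `w` (possible since `Q` is
finite). Every transition of `rep d` that leaves `[w]_R` upwards would contradict maximality, so
the absence of type-2 splitters applies to the block `[w]_R` and yields, for every `d'` with
`d' P d`, a transition of `d'` into `[w]_R`, whose targets lie `R`-above `b`.
-/

theorem Finite.exists_rel_maximal {Q : Type*} [Finite Q] {R : Q → Q → Prop} (hR : Transitive R)
    {s : Set Q} (hs : s.Nonempty) : ∃ w ∈ s, ∀ q ∈ s, R w q → R q w := by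
  let strictlyAbove : Q → Q → Prop := fun q w => R w q ∧ ¬ R q w
  have : IsTrans Q strictlyAbove :=
    ⟨fun _ _ _ ⟨hyx, hxy⟩ ⟨hzy, _⟩ => ⟨hR hzy hyx, fun hxz => hxy (hR hxz hzy)⟩⟩
  have : Std.Irrefl strictlyAbove := ⟨fun _ h => h.2 h.1⟩
  obtain ⟨w, hws, hmin⟩ := (Finite.wellFounded_of_trans_of_irrefl strictlyAbove).has_min s hs
  exact ⟨w, hws, fun q hq hwq => not_not.mp fun hqw => hmin q hq ⟨hwq, hqw⟩⟩

theorem exists_tr_above_of_noSplitters {Q : Type*} [Finite Q] {tr R P : Q → Q → Prop}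
    {rep : Q → Q} (hRrefl : Reflexive R) (hRtrans : Transitive R)
    (hNoSplit1 : ∀ e b, tr e b → ∃ b', R b b' ∧ tr (rep e) b')
    (hNoSplit2 : ∀ e b,
      (∃ b', (R b b' ∧ R b' b) ∧ tr (rep e) b') →
      (∀ q', tr (rep e) q' → R b q' → (R b q' ∧ R q' b)) →
      ∀ e'', P e'' e → ∃ b'', (R b b'' ∧ R b'' b) ∧ tr e'' b'')
    {b d d' : Q} (hd'd : P d' d) (hd : ∃ b', R b b' ∧ tr d b') :
    ∃ b', R b b' ∧ tr d' b' := by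
  obtain ⟨b', hbb', hdb'⟩ := hd
  obtain ⟨c, hb'c, hrep_c⟩ := hNoSplit1 d b' hdb'
  obtain ⟨w, ⟨hrep_w, hbw⟩, hw_max⟩ := Finite.exists_rel_maximal hRtrans
    (s := {q | tr (rep d) q ∧ R b q}) ⟨c, hrep_c, hRtrans hbb' hb'c⟩
  obtain ⟨b'', ⟨hwb'', -⟩, hd'b''⟩ :=
    hNoSplit2 d w ⟨w, ⟨hRrefl w, hRrefl w⟩, hrep_w⟩
      (fun q hq hwq => ⟨hwq, hw_max q ⟨hq, hRtrans hbw hwq⟩ hwq⟩) d' hd'd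
  exact ⟨b'', hRtrans hbw hwb'', hd'b''⟩

theorem no_splitters_implies_blockStable_general {Q : Type*} [Fintype Q] (tr R P : Q → Q → Prop)
    (hRrefl : Reflexive R) (hRtrans : Transitive R)
    (hPeq : Equivalence P)
    (rep : Q → Q)
    (hNoSplit1 : ∀ e b, tr e b → ∃ b', R b b' ∧ tr (rep e) b')
    (hNoSplit2 : ∀ e b,
      (∃ b', (R b b' ∧ R b' b) ∧ tr (rep e) b') →
      (∀ q', tr (rep e) q' → R b q' → (R b q' ∧ R q' b)) →
      ∀ e'', P e'' e → ∃ b'', (R b b'' ∧ R b'' b) ∧ tr e'' b'') :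
    ∀ b d d', P d d' → ((∃ b', R b b' ∧ tr d b') ↔ (∃ b', R b b' ∧ tr d' b')) := fun _ _ _ hdd' =>
  ⟨exists_tr_above_of_noSplitters hRrefl hRtrans hNoSplit1 hNoSplit2 (hPeq.symm hdd'),
    exists_tr_above_of_noSplitters hRrefl hRtrans hNoSplit1 hNoSplit2 hdd'⟩

/-- Theorem 2: in absence of splitter transitions of type 1 and of type 2,
`P` is `R`-block-stable. -/
theorem no_splitters_implies_blockStable {Q : Type*} [Fintype Q] (tr R P : Q → Q → Prop)
    (hRrefl : Reflexive R) (hRtrans : Transitive R)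
    (hPeq : Equivalence P) (hPR : ∀ a b, P a b → R a b)
    (rep : Q → Q) (hrep1 : ∀ q, P q (rep q)) (hrep2 : ∀ q q', P q q' → rep q = rep q')
    (hNoSplit1 : ∀ e b, tr e b → ∃ b', R b b' ∧ tr (rep e) b')
    (hNoSplit2 : ∀ e b,
      (∃ b', (R b b' ∧ R b' b) ∧ tr (rep e) b') →
      (∀ q', tr (rep e) q' → R b q' → (R b q' ∧ R q' b)) →
      ∀ e'', P e'' e → ∃ b'', (R b b'' ∧ R b'' b) ∧ tr e'' b'') :
    ∀ b d d', P d d' → ((∃ b', R b b' ∧ tr d b') ↔ (∃ b', R b b' ∧ tr d' b')) :=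
  no_splitters_implies_blockStable_general tr R P hRrefl hRtrans hPeq rep hNoSplit1 hNoSplit2
end

section
/- Let (Q, →) be a transition system, U a preorder on Q, R a U-stable preorder (so R ⊆ U), P an equivalence relation included in R, and rep a representative map for P. Let e, b ∈ Q with e → b and suppose ¬(∃ b', b R b' ∧ rep(e) → b') (the transition from the block of e to B = [b]_R is a splitter transition of type 1). Then NotRel(B) = (U \ R)(B) is nonempty: there exists b' with b U b' and ¬(b R b'). -/
theorem split1_implies_notRel_nonempty_general {Q : Type*} (tr U R P : Q → Q → Prop)
    (hUstable : ∀ c d b, R c d → tr c b → ∃ b', tr d b' ∧ U b b')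
    (hPR : ∀ a b, P a b → R a b)
    (rep : Q → Q) (hrep1 : ∀ q, P q (rep q))
    (e b : Q) (heb : tr e b)
    (hsplitter : ¬ ∃ b', R b b' ∧ tr (rep e) b') :
    ∃ b', U b b' ∧ ¬ R b b' := by
  obtain ⟨b', htr, hU⟩ := hUstable e (rep e) b (hPR _ _ (hrep1 e)) heb
  exact ⟨b', hU, fun hR => hsplitter ⟨b', hR, htr⟩⟩

/-- Proposition 6, item 1: a splitter transition of type 1 ending in block `B = [b]_R`
implies `NotRel(B) = (U \ R)(B)` is nonempty. -/
theorem split1_implies_notRel_nonempty {Q : Type*} (tr U R P : Q → Q → Prop)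
    (hUrefl : Reflexive U) (hUtrans : Transitive U)
    (hRrefl : Reflexive R) (hRtrans : Transitive R)
    (hRU : ∀ a b, R a b → U a b)
    (hUstable : ∀ c d b, R c d → tr c b → ∃ b', tr d b' ∧ U b b')
    (hPeq : Equivalence P) (hPR : ∀ a b, P a b → R a b)
    (rep : Q → Q) (hrep1 : ∀ q, P q (rep q)) (hrep2 : ∀ q q', P q q' → rep q = rep q')
    (e b : Q) (heb : tr e b)
    (hsplitter : ¬ ∃ b', R b b' ∧ tr (rep e) b') :
    ∃ b', U b b' ∧ ¬ R b b' :=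
  split1_implies_notRel_nonempty_general tr U R P hUstable hPR rep hrep1 e b heb hsplitter
end

section
/- Let (Q, →) be a finite transition system, U a preorder on Q, R a U-stable preorder (so R ⊆ U), P an equivalence relation included in R, and rep a representative map for P. Assume there is no splitter transition of type 1: for all e', b'' with e' → b'' there exists b₂ with b'' R b₂ and rep(e') → b₂. Let e, b ∈ Q and assume the transition from the block of e to B = [b]_R is a splitter transition of type 2: (a) there exists b' ∈ [b]_R with rep(e) → b'; (b) for every q', if rep(e) → q' and b R q' then q' ∈ [b]_R; (c) there exists e'' with e'' P e and no transition from e'' into [b]_R. Then NotRel(B) = (U \ R)(B) is nonempty: there exists b' with b U b' and ¬(b R b'). -/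
/-! Let `e''` be the `P`-sibling of `e` with no transition into `B`. Stability of `R` transfers
the transition `rep e → b'` into `B` to a transition `e'' → q` with `b U q`. If `q` were in the
`R`-upset of `b`, the absence of type-1 splitters would give `rep e → b₂` with `q R b₂`, so
`b R b₂` and by (b) `b₂ ∈ B`; then `q R b` and `q ∈ B`, contradicting the choice of `e''`. -/

theorem split2_implies_notRel_nonempty_general {Q : Type*} (tr U R P : Q → Q → Prop)
    (hUtrans : Transitive U)
    (hRtrans : Transitive R)
    (hRU : ∀ a b, R a b → U a b)
    (hUstable : ∀ c d b, R c d → tr c b → ∃ b', tr d b' ∧ U b b')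
    (hPeq : Equivalence P) (hPR : ∀ a b, P a b → R a b)
    (rep : Q → Q) (hrep1 : ∀ q, P q (rep q)) (hrep2 : ∀ q q', P q q' → rep q = rep q')
    (hNoSplit1 : ∀ e' b'', tr e' b'' → ∃ b₂, R b'' b₂ ∧ tr (rep e') b₂)
    (e b : Q)
    (ha : ∃ b', (R b b' ∧ R b' b) ∧ tr (rep e) b')
    (hb : ∀ q', tr (rep e) q' → R b q' → (R b q' ∧ R q' b))
    (hc : ∃ e'', P e'' e ∧ ¬ ∃ b', (R b b' ∧ R b' b) ∧ tr e'' b') :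
    ∃ b', U b b' ∧ ¬ R b b' := by
  obtain ⟨b', ⟨hbb', -⟩, hrep_b'⟩ := ha
  obtain ⟨e'', hPe, hno_tr⟩ := hc
  have hrep_eq : rep e'' = rep e := hrep2 e'' e hPe
  have hR_rep : R (rep e) e'' := hPR _ _ (hPeq.symm (hrep_eq ▸ hrep1 e''))
  obtain ⟨q, htr_q, hU_b'q⟩ := hUstable (rep e) e'' b' hR_rep hrep_b'
  refine ⟨q, hUtrans (hRU b b' hbb') hU_b'q, fun hR_bq => hno_tr ⟨q, ⟨hR_bq, ?_⟩, htr_q⟩⟩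
  obtain ⟨b₂, hR_qb₂, hrep_b₂⟩ := hNoSplit1 e'' q htr_q
  rw [hrep_eq] at hrep_b₂
  exact hRtrans hR_qb₂ (hb b₂ hrep_b₂ (hRtrans hR_bq hR_qb₂)).2

/-- Proposition 6, item 2: in absence of splitter transitions of type 1, a splitter
transition of type 2 ending in block `B = [b]_R` implies `NotRel(B) = (U \ R)(B)` is
nonempty. -/
theorem split2_implies_notRel_nonempty {Q : Type*} [Fintype Q] (tr U R P : Q → Q → Prop)
    (hUrefl : Reflexive U) (hUtrans : Transitive U)
    (hRrefl : Reflexive R) (hRtrans : Transitive R)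
    (hRU : ∀ a b, R a b → U a b)
    (hUstable : ∀ c d b, R c d → tr c b → ∃ b', tr d b' ∧ U b b')
    (hPeq : Equivalence P) (hPR : ∀ a b, P a b → R a b)
    (rep : Q → Q) (hrep1 : ∀ q, P q (rep q)) (hrep2 : ∀ q q', P q q' → rep q = rep q')
    (hNoSplit1 : ∀ e' b'', tr e' b'' → ∃ b₂, R b'' b₂ ∧ tr (rep e') b₂)
    (e b : Q)
    (ha : ∃ b', (R b b' ∧ R b' b) ∧ tr (rep e) b')
    (hb : ∀ q', tr (rep e) q' → R b q' → (R b q' ∧ R q' b))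
    (hc : ∃ e'', P e'' e ∧ ¬ ∃ b', (R b b' ∧ R b' b) ∧ tr e'' b') :
    ∃ b', U b b' ∧ ¬ R b b' :=
  split2_implies_notRel_nonempty_general tr U R P hUtrans hRtrans hRU hUstable hPeq hPR rep hrep1
    hrep2 hNoSplit1 e b ha hb hc
end
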